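/- Quillen's adjunction theorem (strengthened form): Let C, C' be model categories and F : C ⥤ C', G : C' ⥤ C an adjoint pair F ⊣ G. Suppose F carries weak equivalences between cofibrant objects of C to weak equivalences in C', and G carries weak equivalences between fibrant objects of C' to weak equivalences in C (no assumption that F preserves cofibrations or G preserves fibrations). Then F has a total left derived functor LF : C[W⁻¹] ⥤ C'[W'⁻¹], G has a total right derived functor RG : C'[W'⁻¹] ⥤ C[W⁻¹], and LF ⊣ RG. -/

import Mathlib

open CategoryTheory

universe w w'

section Defs

variable {C : Type*} [Category C] {D : Type*} [Category D] {E : Type*} [Category E]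

/-- `(RF, α)` is a right derived functor of `F` along `P`, i.e. a left Kan extension
of `F` along `P` in the 2-categorical sense. -/
def IsRightDerived (P : C ⥤ D) (F : C ⥤ E) (RF : D ⥤ E) (α : F ⟶ P ⋙ RF) : Prop :=
  ∀ (G : D ⥤ E) (γ : F ⟶ P ⋙ G), ∃! δ : RF ⟶ G, γ = α ≫ Functor.whiskerLeft P δ

/-- `(LF, α)` is a left derived functor of `F` along `P`, i.e. a right Kan extension. -/
def IsLeftDerived (P : C ⥤ D) (F : C ⥤ E) (LF : D ⥤ E) (α : P ⋙ LF ⟶ F) : Prop :=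
  ∀ (G : D ⥤ E) (γ : P ⋙ G ⟶ F), ∃! δ : G ⟶ LF, γ = Functor.whiskerLeft P δ ≫ α

/-- Absolute right derived functor: the Kan extension property is preserved by
post-composition with any functor. -/
def IsAbsoluteRightDerived (P : C ⥤ D) (F : C ⥤ E) (RF : D ⥤ E) (α : F ⟶ P ⋙ RF) : Prop :=
  ∀ (E' : Type w) [Category.{w'} E'] (H : E ⥤ E'),
    IsRightDerived P (F ⋙ H) (RF ⋙ H) (Functor.whiskerRight α H ≫ (Functor.associator P RF H).hom)

/-- Absolute left derived functor. -/
def IsAbsoluteLeftDerived (P : C ⥤ D) (F : C ⥤ E) (LF : D ⥤ E) (α : P ⋙ LF ⟶ F) : Prop :=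
  ∀ (E' : Type w) [Category.{w'} E'] (H : E ⥤ E'),
    IsLeftDerived P (F ⋙ H) (LF ⋙ H) ((Functor.associator P LF H).inv ≫ Functor.whiskerRight α H)

end Defs

section Model

/-- `f` is a retract of `f'` in the arrow category. -/
def IsRetractOf {C : Type*} [Category C] {X Y X' Y' : C} (f : X ⟶ Y) (f' : X' ⟶ Y') : Prop :=
  ∃ (s : X ⟶ X') (r : X' ⟶ X) (s' : Y ⟶ Y') (r' : Y' ⟶ Y),
    s ≫ r = 𝟙 X ∧ s' ≫ r' = 𝟙 Y ∧ s ≫ f' = f ≫ s' ∧ f' ≫ r' = r ≫ f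

/-- A Quillen model structure: weak equivalences, fibrations, cofibrations, with
two-out-of-three, retract stability, lifting and factorization axioms. -/
structure ModelStruct (C : Type*) [Category C] where
  W : MorphismProperty C
  Fib : MorphismProperty C
  Cof : MorphismProperty C
  W_of_iso : ∀ {X Y : C} (f : X ⟶ Y), IsIso f → W f
  W_comp : ∀ {X Y Z : C} (f : X ⟶ Y) (g : Y ⟶ Z), W f → W g → W (f ≫ g)
  W_of_comp_left : ∀ {X Y Z : C} (f : X ⟶ Y) (g : Y ⟶ Z), W g → W (f ≫ g) → W f
  W_of_comp_right : ∀ {X Y Z : C} (f : X ⟶ Y) (g : Y ⟶ Z), W f → W (f ≫ g) → W g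
  W_retract : ∀ {X Y X' Y' : C} (f : X ⟶ Y) (f' : X' ⟶ Y'), IsRetractOf f f' → W f' → W f
  Fib_retract : ∀ {X Y X' Y' : C} (f : X ⟶ Y) (f' : X' ⟶ Y'), IsRetractOf f f' → Fib f' → Fib f
  Cof_retract : ∀ {X Y X' Y' : C} (f : X ⟶ Y) (f' : X' ⟶ Y'), IsRetractOf f f' → Cof f' → Cof f
  lift_cof_trivFib : ∀ {A B X Y : C} (i : A ⟶ B) (p : X ⟶ Y), Cof i → Fib p → W p →
    HasLiftingProperty i p
  lift_trivCof_fib : ∀ {A B X Y : C} (i : A ⟶ B) (p : X ⟶ Y), Cof i → W i → Fib p →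
    HasLiftingProperty i p
  fact_cof_trivFib : ∀ {X Y : C} (f : X ⟶ Y),
    ∃ (Z : C) (i : X ⟶ Z) (p : Z ⟶ Y), Cof i ∧ Fib p ∧ W p ∧ i ≫ p = f
  fact_trivCof_fib : ∀ {X Y : C} (f : X ⟶ Y),
    ∃ (Z : C) (i : X ⟶ Z) (p : Z ⟶ Y), Cof i ∧ W i ∧ Fib p ∧ i ≫ p = f

/-- An object is fibrant if the map to the terminal object is a fibration. -/
def ModelStruct.Fibrant {C : Type*} [Category C] [Limits.HasTerminal C]
    (M : ModelStruct C) (X : C) : Prop :=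
  M.Fib (Limits.terminal.from X)

/-- An object is cofibrant if the map from the initial object is a cofibration. -/
def ModelStruct.Cofibrant {C : Type*} [Category C] [Limits.HasInitial C]
    (M : ModelStruct C) (X : C) : Prop :=
  M.Cof (Limits.initial.to X)

end Model

/-!
Choose cofibrant replacements `π X : Q X ⥲ X` by trivial fibrations. Any `f : X ⟶ Y` lifts
to `Q X ⟶ Q Y`, and two lifts of the same map are left homotopic through a cylinder on the
cofibrant object `Q X`; since `F ⋙ P'` inverts weak equivalences between cofibrant objects it
identifies them, so `X ↦ P' (F (Q X))` is a functor inverting `W`, which descends to `LF`.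
The comparison `α : P ⋙ LF ⟶ F ⋙ P'` is invertible on cofibrant objects, and any
transformation `P ⋙ G ⟶ F ⋙ P'` then factors uniquely through it, because its components are
determined on the replacements `Q X`. The same argument applies after post-composing with any
functor, so `LF` and, dually, `RG` are absolute derived functors, and the adjunction `F ⊣ G`
induces `LF ⊣ RG` (Maltsiniotis).
-/

section Replacement

variable {C D E : Type*} [Category C] [Category D] [Category E]

structure LeftReplacement (W : MorphismProperty C) where
  obj : C → C
  π : ∀ X, obj X ⟶ X
  W_π : ∀ X, W (π X)
  exists_lift : ∀ {X Y : C} (f : X ⟶ Y), ∃ g : obj X ⟶ obj Y, g ≫ π Y = π X ≫ f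

structure RightReplacement (W : MorphismProperty C) where
  obj : C → C
  ι : ∀ X, X ⟶ obj X
  W_ι : ∀ X, W (ι X)
  exists_lift : ∀ {X Y : C} (f : X ⟶ Y), ∃ g : obj X ⟶ obj Y, ι X ≫ g = f ≫ ι Y

namespace LeftReplacement

variable {W : MorphismProperty C} (R : LeftReplacement W)

noncomputable def lift {X Y : C} (f : X ⟶ Y) : R.obj X ⟶ R.obj Y :=
  (R.exists_lift f).choose

@[simp]
lemma lift_π {X Y : C} (f : X ⟶ Y) : R.lift f ≫ R.π Y = R.π X ≫ f :=
  (R.exists_lift f).choose_spec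

noncomputable def functor (Φ : C ⥤ E)
    (hΦ : ∀ {X Y : C} (g g' : R.obj X ⟶ R.obj Y), g ≫ R.π Y = g' ≫ R.π Y → Φ.map g = Φ.map g') :
    C ⥤ E where
  obj X := Φ.obj (R.obj X)
  map f := Φ.map (R.lift f)
  map_id X := by rw [hΦ (R.lift (𝟙 X)) (𝟙 _) (by simp), Φ.map_id]
  map_comp f g := by
    rw [hΦ (R.lift (f ≫ g)) (R.lift f ≫ R.lift g)
      (by rw [Category.assoc, R.lift_π, R.lift_π, reassoc_of% (R.lift_π f)]), Φ.map_comp]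

noncomputable def functorπ (Φ : C ⥤ E)
    (hΦ : ∀ {X Y : C} (g g' : R.obj X ⟶ R.obj Y), g ≫ R.π Y = g' ≫ R.π Y → Φ.map g = Φ.map g') :
    R.functor Φ hΦ ⟶ Φ where
  app X := Φ.map (R.π X)
  naturality _ _ f :=
    (Φ.map_comp _ _).symm.trans ((Φ.congr_map (R.lift_π f)).trans (Φ.map_comp _ _))

lemma isLeftDerived (P : C ⥤ D) [P.IsLocalization W] {F : C ⥤ E} {LF : D ⥤ E}
    (α : P ⋙ LF ⟶ F) (hα : ∀ X, IsIso (α.app (R.obj X))) : IsLeftDerived P F LF α := by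
  intro G γ
  have hP (X : C) : IsIso (P.map (R.π X)) := Localization.inverts P W _ (R.W_π X)
  -- `α` is invertible on replacements and `P` inverts `R.π`, which forces the components
  obtain ⟨θ, hθ⟩ : ∃ θ : ∀ X, G.obj (P.obj X) ⟶ LF.obj (P.obj X), ∀ X,
      G.map (P.map (R.π X)) ≫ θ X =
        γ.app (R.obj X) ≫ inv (α.app (R.obj X)) ≫ LF.map (P.map (R.π X)) :=
    ⟨fun X => inv (G.map (P.map (R.π X))) ≫ γ.app (R.obj X) ≫ inv (α.app (R.obj X)) ≫
      LF.map (P.map (R.π X)), fun X => by simp⟩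
  have hα_inv {X Y : C} (g : X ⟶ Y) [IsIso (α.app X)] [IsIso (α.app Y)] :
      F.map g ≫ inv (α.app Y) = inv (α.app X) ≫ LF.map (P.map g) := by
    rw [IsIso.comp_inv_eq, Category.assoc, ← Functor.comp_map, α.naturality,
      IsIso.inv_hom_id_assoc]
  have hθ_nat {X Y : C} (f : X ⟶ Y) : G.map (P.map f) ≫ θ Y = θ X ≫ LF.map (P.map f) := by
    obtain ⟨g, hg⟩ := R.exists_lift f
    have hGg : G.map (P.map (R.π X)) ≫ G.map (P.map f) =
        G.map (P.map g) ≫ G.map (P.map (R.π Y)) := by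
      simp only [← G.map_comp, ← P.map_comp, hg]
    have hLFg : LF.map (P.map g) ≫ LF.map (P.map (R.π Y)) =
        LF.map (P.map (R.π X)) ≫ LF.map (P.map f) := by
      simp only [← LF.map_comp, ← P.map_comp, hg]
    rw [← cancel_epi (G.map (P.map (R.π X))), reassoc_of% hGg, hθ, reassoc_of% hθ,
      ← Functor.comp_map, γ.naturality_assoc, reassoc_of% (hα_inv g), hLFg]
  have hθ_unique (δ : G ⟶ LF) (hδ : γ = Functor.whiskerLeft P δ ≫ α) (X : C) :
      δ.app (P.obj X) = θ X := by
    rw [← cancel_epi (G.map (P.map (R.π X))), hθ, δ.naturality, hδ]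
    simp
  obtain ⟨δ, hδ⟩ := (Localization.full_whiskeringLeft P W E).map_surjective
    { app := θ, naturality := fun _ _ f => hθ_nat f : P ⋙ G ⟶ P ⋙ LF }
  refine ⟨δ, ?_, fun δ' hδ' => (Localization.faithful_whiskeringLeft P W E).map_injective ?_⟩
  · ext X
    have := congr_app hδ X
    dsimp at this ⊢
    rw [this, ← cancel_epi (G.map (P.map (R.π X))), reassoc_of% hθ]
    simp only [← Functor.comp_map, α.naturality, γ.naturality, IsIso.inv_hom_id_assoc]
  · ext X
    exact (hθ_unique δ' hδ' X).trans (congr_app hδ X).symm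

end LeftReplacement

namespace RightReplacement

variable {W : MorphismProperty C} (R : RightReplacement W)

noncomputable def lift {X Y : C} (f : X ⟶ Y) : R.obj X ⟶ R.obj Y :=
  (R.exists_lift f).choose

@[simp]
lemma ι_lift {X Y : C} (f : X ⟶ Y) : R.ι X ≫ R.lift f = f ≫ R.ι Y :=
  (R.exists_lift f).choose_spec

noncomputable def functor (Φ : C ⥤ E)
    (hΦ : ∀ {X Y : C} (g g' : R.obj X ⟶ R.obj Y), R.ι X ≫ g = R.ι X ≫ g' → Φ.map g = Φ.map g') :
    C ⥤ E where
  obj X := Φ.obj (R.obj X)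
  map f := Φ.map (R.lift f)
  map_id X := by rw [hΦ (R.lift (𝟙 X)) (𝟙 _) (by simp), Φ.map_id]
  map_comp f g := by
    rw [hΦ (R.lift (f ≫ g)) (R.lift f ≫ R.lift g)
      (by rw [R.ι_lift, reassoc_of% (R.ι_lift f), R.ι_lift, Category.assoc]), Φ.map_comp]

noncomputable def functorι (Φ : C ⥤ E)
    (hΦ : ∀ {X Y : C} (g g' : R.obj X ⟶ R.obj Y), R.ι X ≫ g = R.ι X ≫ g' → Φ.map g = Φ.map g') :
    Φ ⟶ R.functor Φ hΦ where
  app X := Φ.map (R.ι X)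
  naturality _ _ f :=
    (Φ.map_comp _ _).symm.trans ((Φ.congr_map (R.ι_lift f)).symm.trans (Φ.map_comp _ _))

lemma isRightDerived (P : C ⥤ D) [P.IsLocalization W] {F : C ⥤ E} {RF : D ⥤ E}
    (α : F ⟶ P ⋙ RF) (hα : ∀ X, IsIso (α.app (R.obj X))) : IsRightDerived P F RF α := by
  intro G γ
  have hP (X : C) : IsIso (P.map (R.ι X)) := Localization.inverts P W _ (R.W_ι X)
  obtain ⟨θ, hθ⟩ : ∃ θ : ∀ X, RF.obj (P.obj X) ⟶ G.obj (P.obj X), ∀ X,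
      θ X ≫ G.map (P.map (R.ι X)) =
        RF.map (P.map (R.ι X)) ≫ inv (α.app (R.obj X)) ≫ γ.app (R.obj X) :=
    ⟨fun X => RF.map (P.map (R.ι X)) ≫ inv (α.app (R.obj X)) ≫ γ.app (R.obj X) ≫
      inv (G.map (P.map (R.ι X))), fun X => by simp⟩
  have hα_inv {X Y : C} (g : X ⟶ Y) [IsIso (α.app X)] [IsIso (α.app Y)] :
      RF.map (P.map g) ≫ inv (α.app Y) = inv (α.app X) ≫ F.map g := by
    rw [IsIso.comp_inv_eq, Category.assoc, α.naturality, IsIso.inv_hom_id_assoc, Functor.comp_map]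
  have hθ_nat {X Y : C} (f : X ⟶ Y) : RF.map (P.map f) ≫ θ Y = θ X ≫ G.map (P.map f) := by
    obtain ⟨g, hg⟩ := R.exists_lift f
    have hGg : G.map (P.map f) ≫ G.map (P.map (R.ι Y)) =
        G.map (P.map (R.ι X)) ≫ G.map (P.map g) := by
      simp only [← G.map_comp, ← P.map_comp, hg]
    have hRFg : RF.map (P.map f) ≫ RF.map (P.map (R.ι Y)) =
        RF.map (P.map (R.ι X)) ≫ RF.map (P.map g) := by
      simp only [← RF.map_comp, ← P.map_comp, hg]
    rw [← cancel_mono (G.map (P.map (R.ι Y))), Category.assoc, Category.assoc, hθ, hGg,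
      reassoc_of% hθ, reassoc_of% hRFg, reassoc_of% (hα_inv g), ← Functor.comp_map,
      γ.naturality]
    rfl
  have hθ_unique (δ : RF ⟶ G) (hδ : γ = α ≫ Functor.whiskerLeft P δ) (X : C) :
      δ.app (P.obj X) = θ X := by
    rw [← cancel_mono (G.map (P.map (R.ι X))), hθ, ← δ.naturality, hδ]
    simp
  obtain ⟨δ, hδ⟩ := (Localization.full_whiskeringLeft P W E).map_surjective
    { app := θ, naturality := fun _ _ f => hθ_nat f : P ⋙ RF ⟶ P ⋙ G }
  refine ⟨δ, ?_, fun δ' hδ' => (Localization.faithful_whiskeringLeft P W E).map_injective ?_⟩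
  · ext X
    have := congr_app hδ X
    dsimp at this ⊢
    rw [this, ← cancel_mono (G.map (P.map (R.ι X))), Category.assoc, hθ]
    simp only [← Functor.comp_map, ← α.naturality_assoc, IsIso.hom_inv_id_assoc, γ.naturality]
  · ext X
    exact (hθ_unique δ' hδ' X).trans (congr_app hδ X).symm

end RightReplacement

end Replacement

section DerivedFunctor

open Limits

variable {C D E : Type*} [Category C] [Category D] [Category E]

lemma IsLeftDerived.isLeftDerivedFunctor {P : C ⥤ D} {F : C ⥤ E} {LF : D ⥤ E}
    {α : P ⋙ LF ⟶ F} (h : IsLeftDerived P F LF α) (W : MorphismProperty C)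
    [P.IsLocalization W] : LF.IsLeftDerivedFunctor α W :=
  ⟨⟨⟨IsTerminal.ofUniqueHom
    (fun G => CostructuredArrow.homMk (h G.left G.hom).exists.choose
      (h G.left G.hom).exists.choose_spec.symm)
    (fun G m => CostructuredArrow.hom_ext _ _
      ((h G.left G.hom).unique (CostructuredArrow.w m).symm
        (h G.left G.hom).exists.choose_spec))⟩⟩⟩

lemma IsRightDerived.isRightDerivedFunctor {P : C ⥤ D} {F : C ⥤ E} {RF : D ⥤ E}
    {α : F ⟶ P ⋙ RF} (h : IsRightDerived P F RF α) (W : MorphismProperty C)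
    [P.IsLocalization W] : RF.IsRightDerivedFunctor α W :=
  ⟨⟨⟨IsInitial.ofUniqueHom
    (fun G => StructuredArrow.homMk (h G.right G.hom).exists.choose
      (h G.right G.hom).exists.choose_spec.symm)
    (fun G m => StructuredArrow.hom_ext _ _
      ((h G.right G.hom).unique (StructuredArrow.w m).symm
        (h G.right G.hom).exists.choose_spec))⟩⟩⟩

end DerivedFunctor

namespace ModelStruct

open Limits

variable {C : Type*} [Category C] (M : ModelStruct C)

/-- The retract argument. -/
lemma cof_of_llp {A B : C} (i : A ⟶ B)
    (h : ∀ {X Y : C} (p : X ⟶ Y), M.Fib p → M.W p → HasLiftingProperty i p) : M.Cof i := by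
  obtain ⟨Z, j, q, hj, hq, hwq, hfac⟩ := M.fact_cof_trivFib i
  have := h q hq hwq
  have sq : CommSq j i q (𝟙 B) := ⟨by simpa using hfac⟩
  exact M.Cof_retract i j
    ⟨𝟙 A, 𝟙 A, sq.lift, q, by simp, by simp, by simp, by simpa using hfac⟩ hj

lemma fib_of_rlp {X Y : C} (p : X ⟶ Y)
    (h : ∀ {A B : C} (i : A ⟶ B), M.Cof i → M.W i → HasLiftingProperty i p) : M.Fib p := by
  obtain ⟨Z, j, q, hj, hwj, hq, hfac⟩ := M.fact_trivCof_fib p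
  have := h j hj hwj
  have sq : CommSq (𝟙 X) j p q := ⟨by simpa using hfac.symm⟩
  exact M.Fib_retract p q ⟨j, sq.lift, 𝟙 Y, 𝟙 Y, by simp, by simp, by simp [hfac], by simp⟩ hq

lemma cof_comp {X Y Z : C} {i : X ⟶ Y} {j : Y ⟶ Z} (hi : M.Cof i) (hj : M.Cof j) :
    M.Cof (i ≫ j) :=
  M.cof_of_llp _ fun p hp hw =>
    have := M.lift_cof_trivFib i p hi hp hw
    have := M.lift_cof_trivFib j p hj hp hw
    inferInstance

lemma fib_comp {X Y Z : C} {p : X ⟶ Y} {q : Y ⟶ Z} (hp : M.Fib p) (hq : M.Fib q) :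
    M.Fib (p ≫ q) :=
  M.fib_of_rlp _ fun i hi hw =>
    have := M.lift_trivCof_fib i p hi hw hp
    have := M.lift_trivCof_fib i q hi hw hq
    inferInstance

section Cofibrant

variable [HasInitial C]

lemma cofibrant_of_cof {A B : C} (hA : M.Cofibrant A) {i : A ⟶ B} (hi : M.Cof i) :
    M.Cofibrant B := by
  rw [Cofibrant, initial.hom_ext (initial.to B) (initial.to A ≫ i)]
  exact M.cof_comp hA hi

lemma exists_lift_of_cofibrant {A Z Y : C} (hA : M.Cofibrant A) {p : Z ⟶ Y} (hp : M.Fib p)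
    (hw : M.W p) (f : A ⟶ Y) : ∃ g : A ⟶ Z, g ≫ p = f := by
  have := M.lift_cof_trivFib _ p hA hp hw
  have sq : CommSq (initial.to Z) (initial.to A) p f := ⟨initial.hom_ext _ _⟩
  exact ⟨sq.lift, sq.fac_right⟩

lemma cofibrant_coprod [HasBinaryCoproducts C] {A B : C} (hA : M.Cofibrant A)
    (hB : M.Cofibrant B) : M.Cofibrant (A ⨿ B) :=
  M.cof_of_llp _ fun p hp hw => ⟨fun {_ v} _ => by
    obtain ⟨g₁, hg₁⟩ := M.exists_lift_of_cofibrant hA hp hw (coprod.inl ≫ v)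
    obtain ⟨g₂, hg₂⟩ := M.exists_lift_of_cofibrant hB hp hw (coprod.inr ≫ v)
    exact CommSq.HasLift.mk' ⟨coprod.desc g₁ g₂, initial.hom_ext _ _,
      by ext <;> simp [hg₁, hg₂, coprod.inl_desc, coprod.inr_desc]⟩⟩

/-- The homotopy lives on a cylinder `A ⨿ A ↣ I ⥲ A`, which is cofibrant because `A` is. -/
lemma exists_leftHomotopy [HasBinaryCoproducts C] {A Z Y : C} (hA : M.Cofibrant A)
    {p : Z ⟶ Y} (hp : M.Fib p) (hw : M.W p) {g₁ g₂ : A ⟶ Z} (h : g₁ ≫ p = g₂ ≫ p) :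
    ∃ (I : C) (i₀ i₁ : A ⟶ I) (σ : I ⟶ A) (H : I ⟶ Z), M.Cofibrant I ∧ M.W σ ∧
      i₀ ≫ σ = i₁ ≫ σ ∧ i₀ ≫ H = g₁ ∧ i₁ ≫ H = g₂ := by
  obtain ⟨I, j, σ, hj, -, hσ, hfac⟩ := M.fact_cof_trivFib (coprod.desc (𝟙 A) (𝟙 A))
  have := M.lift_cof_trivFib j p hj hp hw
  have sq : CommSq (coprod.desc g₁ g₂) j p (σ ≫ g₁ ≫ p) :=
    ⟨by ext <;> simp [reassoc_of% hfac, h, coprod.inl_desc, coprod.inr_desc]⟩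
  refine ⟨I, coprod.inl ≫ j, coprod.inr ≫ j, σ, sq.lift,
    M.cofibrant_of_cof (M.cofibrant_coprod hA hA) hj, hσ,
    by simp [hfac, coprod.inl_desc, coprod.inr_desc], ?_, ?_⟩ <;>
    simp [sq.fac_left, coprod.inl_desc, coprod.inr_desc]

lemma map_eq_of_comp_eq [HasBinaryCoproducts C] {E : Type*} [Category E] (Φ : C ⥤ E)
    (hΦ : ∀ {X Y : C} (f : X ⟶ Y), M.W f → M.Cofibrant X → M.Cofibrant Y → IsIso (Φ.map f))
    {A Z Y : C} (hA : M.Cofibrant A) {p : Z ⟶ Y} (hp : M.Fib p) (hw : M.W p) {g₁ g₂ : A ⟶ Z}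
    (h : g₁ ≫ p = g₂ ≫ p) : Φ.map g₁ = Φ.map g₂ := by
  obtain ⟨I, i₀, i₁, σ, H, hI, hσ, hi, rfl, rfl⟩ := M.exists_leftHomotopy hA hp hw h
  have := hΦ σ hσ hI hA
  have hΦi : Φ.map i₀ = Φ.map i₁ := by
    rw [← cancel_mono (Φ.map σ), ← Φ.map_comp, ← Φ.map_comp, hi]
  rw [Φ.map_comp, Φ.map_comp, hΦi]

lemma exists_cofibrantReplacement (X : C) :
    ∃ (Q : C) (π : Q ⟶ X), M.Cofibrant Q ∧ M.Fib π ∧ M.W π := by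
  obtain ⟨Q, i, π, hi, hπ, hwπ, -⟩ := M.fact_cof_trivFib (initial.to X)
  exact ⟨Q, π, by rwa [Cofibrant, initial.hom_ext (initial.to Q) i], hπ, hwπ⟩

noncomputable def cofibrantReplacement : LeftReplacement M.W where
  obj X := (M.exists_cofibrantReplacement X).choose
  π X := (M.exists_cofibrantReplacement X).choose_spec.choose
  W_π X := (M.exists_cofibrantReplacement X).choose_spec.choose_spec.2.2
  exists_lift {X Y} _ :=
    have h := (M.exists_cofibrantReplacement Y).choose_spec.choose_spec
    M.exists_lift_of_cofibrant (M.exists_cofibrantReplacement X).choose_spec.choose_spec.1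
      h.2.1 h.2.2 _

lemma cofibrantReplacement_obj_cofibrant (X : C) :
    M.Cofibrant (M.cofibrantReplacement.obj X) :=
  (M.exists_cofibrantReplacement X).choose_spec.choose_spec.1

lemma cofibrantReplacement_fib_π (X : C) : M.Fib (M.cofibrantReplacement.π X) :=
  (M.exists_cofibrantReplacement X).choose_spec.choose_spec.2.1

lemma isLeftDerived_of_isIso {D E : Type*} [Category D] [Category E] (P : C ⥤ D)
    [P.IsLocalization M.W] {Φ : C ⥤ E} {LF : D ⥤ E} (α : P ⋙ LF ⟶ Φ)
    (hα : ∀ X, M.Cofibrant X → IsIso (α.app X)) : IsLeftDerived P Φ LF α :=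
  M.cofibrantReplacement.isLeftDerived P α fun X => hα _ (M.cofibrantReplacement_obj_cofibrant X)

lemma exists_leftDerived [HasBinaryCoproducts C] {E : Type*} [Category E] (Φ : C ⥤ E)
    (hΦ : ∀ {X Y : C} (f : X ⟶ Y), M.W f → M.Cofibrant X → M.Cofibrant Y → IsIso (Φ.map f)) :
    ∃ (LF : M.W.Localization ⥤ E) (α : M.W.Q ⋙ LF ⟶ Φ), ∀ X, M.Cofibrant X → IsIso (α.app X) := by
  let R := M.cofibrantReplacement
  have hR := M.cofibrantReplacement_obj_cofibrant
  let L := R.functor Φ fun g g' h =>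
    M.map_eq_of_comp_eq Φ hΦ (hR _) (M.cofibrantReplacement_fib_π _) (R.W_π _) h
  have hL : M.W.IsInvertedBy L := fun X Y f hf => by
    have hWf : M.W (R.lift f) := M.W_of_comp_left _ _ (R.W_π Y)
      (by rw [R.lift_π]; exact M.W_comp _ _ (R.W_π X) hf)
    exact hΦ _ hWf (hR X) (hR Y)
  exact ⟨Localization.lift L hL M.W.Q, (Localization.fac L hL M.W.Q).hom ≫ R.functorπ Φ _,
    fun X hX => IsIso.comp_isIso' inferInstance (hΦ (R.π X) (R.W_π X) (hR X) hX)⟩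

end Cofibrant

section Fibrant

variable [HasTerminal C]

lemma fibrant_of_fib {A B : C} (hB : M.Fibrant B) {p : A ⟶ B} (hp : M.Fib p) :
    M.Fibrant A := by
  rw [Fibrant, terminal.hom_ext (terminal.from A) (p ≫ terminal.from B)]
  exact M.fib_comp hp hB

lemma exists_extension_of_fibrant {A B Z : C} (hZ : M.Fibrant Z) {i : A ⟶ B} (hi : M.Cof i)
    (hw : M.W i) (f : A ⟶ Z) : ∃ g : B ⟶ Z, i ≫ g = f := by
  have := M.lift_trivCof_fib i _ hi hw hZ
  have sq : CommSq f i (terminal.from Z) (terminal.from B) := ⟨terminal.hom_ext _ _⟩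
  exact ⟨sq.lift, sq.fac_left⟩

lemma fibrant_prod [HasBinaryProducts C] {A B : C} (hA : M.Fibrant A) (hB : M.Fibrant B) :
    M.Fibrant (A ⨯ B) :=
  M.fib_of_rlp _ fun i hi hw => ⟨fun {u _} _ => by
    obtain ⟨g₁, hg₁⟩ := M.exists_extension_of_fibrant hA hi hw (u ≫ prod.fst)
    obtain ⟨g₂, hg₂⟩ := M.exists_extension_of_fibrant hB hi hw (u ≫ prod.snd)
    exact CommSq.HasLift.mk' ⟨prod.lift g₁ g₂,
      by ext <;> simp [hg₁, hg₂, prod.lift_fst, prod.lift_snd], terminal.hom_ext _ _⟩⟩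

/-- The homotopy lives on a path object `A ⥲ P ↠ A ⨯ A`, which is fibrant because `A` is. -/
lemma exists_rightHomotopy [HasBinaryProducts C] {Y Z A : C} (hA : M.Fibrant A)
    {i : Y ⟶ Z} (hi : M.Cof i) (hw : M.W i) {g₁ g₂ : Z ⟶ A} (h : i ≫ g₁ = i ≫ g₂) :
    ∃ (P : C) (p₀ p₁ : P ⟶ A) (s : A ⟶ P) (H : Z ⟶ P), M.Fibrant P ∧ M.W s ∧
      s ≫ p₀ = s ≫ p₁ ∧ H ≫ p₀ = g₁ ∧ H ≫ p₁ = g₂ := by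
  obtain ⟨P, s, q, hs, hws, hq, hfac⟩ := M.fact_trivCof_fib (prod.lift (𝟙 A) (𝟙 A))
  have := M.lift_trivCof_fib i q hi hw hq
  have sq : CommSq (i ≫ g₁ ≫ s) i q (prod.lift g₁ g₂) :=
    ⟨by ext <;> simp [hfac, h, prod.lift_fst, prod.lift_snd]⟩
  refine ⟨P, q ≫ prod.fst, q ≫ prod.snd, s, sq.lift,
    M.fibrant_of_fib (M.fibrant_prod hA hA) hq, hws,
    by simp [reassoc_of% hfac, prod.lift_fst, prod.lift_snd], ?_, ?_⟩ <;>
    simp [reassoc_of% sq.fac_right, prod.lift_fst, prod.lift_snd]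

lemma map_eq_of_eq_comp [HasBinaryProducts C] {E : Type*} [Category E] (Φ : C ⥤ E)
    (hΦ : ∀ {X Y : C} (f : X ⟶ Y), M.W f → M.Fibrant X → M.Fibrant Y → IsIso (Φ.map f))
    {Y Z A : C} (hA : M.Fibrant A) {i : Y ⟶ Z} (hi : M.Cof i) (hw : M.W i) {g₁ g₂ : Z ⟶ A}
    (h : i ≫ g₁ = i ≫ g₂) : Φ.map g₁ = Φ.map g₂ := by
  obtain ⟨P, p₀, p₁, s, H, hP, hs, hp, rfl, rfl⟩ := M.exists_rightHomotopy hA hi hw h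
  have := hΦ s hs hA hP
  have hΦp : Φ.map p₀ = Φ.map p₁ := by
    rw [← cancel_epi (Φ.map s), ← Φ.map_comp, ← Φ.map_comp, hp]
  rw [Φ.map_comp, Φ.map_comp, hΦp]

lemma exists_fibrantReplacement (X : C) :
    ∃ (R : C) (ι : X ⟶ R), M.Fibrant R ∧ M.Cof ι ∧ M.W ι := by
  obtain ⟨R, ι, p, hι, hwι, hp, -⟩ := M.fact_trivCof_fib (terminal.from X)
  exact ⟨R, ι, by rwa [Fibrant, terminal.hom_ext (terminal.from R) p], hι, hwι⟩

noncomputable def fibrantReplacement : RightReplacement M.W where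
  obj X := (M.exists_fibrantReplacement X).choose
  ι X := (M.exists_fibrantReplacement X).choose_spec.choose
  W_ι X := (M.exists_fibrantReplacement X).choose_spec.choose_spec.2.2
  exists_lift {X Y} _ :=
    have h := (M.exists_fibrantReplacement X).choose_spec.choose_spec
    M.exists_extension_of_fibrant (M.exists_fibrantReplacement Y).choose_spec.choose_spec.1
      h.2.1 h.2.2 _

lemma fibrantReplacement_obj_fibrant (X : C) : M.Fibrant (M.fibrantReplacement.obj X) :=
  (M.exists_fibrantReplacement X).choose_spec.choose_spec.1

lemma fibrantReplacement_cof_ι (X : C) : M.Cof (M.fibrantReplacement.ι X) :=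
  (M.exists_fibrantReplacement X).choose_spec.choose_spec.2.1

lemma isRightDerived_of_isIso {D E : Type*} [Category D] [Category E] (P : C ⥤ D)
    [P.IsLocalization M.W] {Φ : C ⥤ E} {RF : D ⥤ E} (α : Φ ⟶ P ⋙ RF)
    (hα : ∀ X, M.Fibrant X → IsIso (α.app X)) : IsRightDerived P Φ RF α :=
  M.fibrantReplacement.isRightDerived P α fun X => hα _ (M.fibrantReplacement_obj_fibrant X)

lemma exists_rightDerived [HasBinaryProducts C] {E : Type*} [Category E] (Φ : C ⥤ E)
    (hΦ : ∀ {X Y : C} (f : X ⟶ Y), M.W f → M.Fibrant X → M.Fibrant Y → IsIso (Φ.map f)) :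
    ∃ (RF : M.W.Localization ⥤ E) (α : Φ ⟶ M.W.Q ⋙ RF), ∀ X, M.Fibrant X → IsIso (α.app X) := by
  let R := M.fibrantReplacement
  have hR := M.fibrantReplacement_obj_fibrant
  let L := R.functor Φ fun g g' h =>
    M.map_eq_of_eq_comp Φ hΦ (hR _) (M.fibrantReplacement_cof_ι _) (R.W_ι _) h
  have hL : M.W.IsInvertedBy L := fun X Y f hf => by
    have hWf : M.W (R.lift f) := M.W_of_comp_right (R.ι X) _ (R.W_ι X)
      (by rw [R.ι_lift]; exact M.W_comp _ _ hf (R.W_ι Y))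
    exact hΦ _ hWf (hR X) (hR Y)
  exact ⟨Localization.lift L hL M.W.Q, R.functorι Φ _ ≫ (Localization.fac L hL M.W.Q).inv,
    fun X hX => IsIso.comp_isIso' (hΦ (R.ι X) (R.W_ι X) hX (hR X)) inferInstance⟩

end Fibrant

end ModelStruct

theorem stmt8_general {C : Type*} [Category C] {C' : Type*} [Category C']
    [Limits.HasFiniteColimits C]
    [Limits.HasFiniteLimits C']
    (M : ModelStruct C) (M' : ModelStruct C')
    (F : C ⥤ C') (G : C' ⥤ C) (adj : F ⊣ G)
    (hF : ∀ {X Y : C} (f : X ⟶ Y), M.W f → M.Cofibrant X → M.Cofibrant Y → M'.W (F.map f))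
    (hG : ∀ {X Y : C'} (f : X ⟶ Y), M'.W f → M'.Fibrant X → M'.Fibrant Y → M.W (G.map f)) :
    ∃ (LF : M.W.Localization ⥤ M'.W.Localization) (α : M.W.Q ⋙ LF ⟶ F ⋙ M'.W.Q)
      (RG : M'.W.Localization ⥤ M.W.Localization) (β : G ⋙ M.W.Q ⟶ M'.W.Q ⋙ RG),
      IsLeftDerived M.W.Q (F ⋙ M'.W.Q) LF α ∧
      IsRightDerived M'.W.Q (G ⋙ M.W.Q) RG β ∧
      Nonempty (LF ⊣ RG) := by
  obtain ⟨LF, α, hα⟩ := M.exists_leftDerived (F ⋙ M'.W.Q) fun f hf hX hY =>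
    Localization.inverts M'.W.Q M'.W _ (hF f hf hX hY)
  obtain ⟨RG, β, hβ⟩ := M'.exists_rightDerived (G ⋙ M.W.Q) fun f hf hX hY =>
    Localization.inverts M.W.Q M.W _ (hG f hf hX hY)
  have hLF := M.isLeftDerived_of_isIso M.W.Q α hα
  have hRG := M'.isRightDerived_of_isIso M'.W.Q β hβ
  have := hLF.isLeftDerivedFunctor M.W
  have := hRG.isRightDerivedFunctor M'.W
  -- `Adjunction.derived` also needs `LF ⋙ RG` and `RG ⋙ LF` to be derived functors
  have := (M.isLeftDerived_of_isIso M.W.Q ((Functor.associator _ _ _).inv ≫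
    Functor.whiskerRight α RG) fun X hX => by
      have := hα X hX
      dsimp
      infer_instance).isLeftDerivedFunctor M.W
  have := (M'.isRightDerived_of_isIso M'.W.Q (Functor.whiskerRight β LF ≫
    (Functor.associator _ _ _).hom) fun X hX => by
      have := hβ X hX
      dsimp
      infer_instance).isRightDerivedFunctor M'.W
  exact ⟨LF, α, RG, β, hLF, hRG, ⟨adj.derived M.W M'.W α β⟩⟩

/-- Quillen's adjunction theorem, strengthened: for an adjunction `F ⊣ G`
between model categories where `F` preserves weak equivalences between cofibrant objects
and `G` preserves weak equivalences between fibrant objects, the total left derived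
functor of `F` and the total right derived functor of `G` exist and are adjoint. -/
theorem stmt8 {C : Type*} [Category C] {C' : Type*} [Category C']
    [Limits.HasFiniteLimits C] [Limits.HasFiniteColimits C]
    [Limits.HasFiniteLimits C'] [Limits.HasFiniteColimits C']
    (M : ModelStruct C) (M' : ModelStruct C')
    (F : C ⥤ C') (G : C' ⥤ C) (adj : F ⊣ G)
    (hF : ∀ {X Y : C} (f : X ⟶ Y), M.W f → M.Cofibrant X → M.Cofibrant Y → M'.W (F.map f))
    (hG : ∀ {X Y : C'} (f : X ⟶ Y), M'.W f → M'.Fibrant X → M'.Fibrant Y → M.W (G.map f)) :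
    ∃ (LF : M.W.Localization ⥤ M'.W.Localization) (α : M.W.Q ⋙ LF ⟶ F ⋙ M'.W.Q)
      (RG : M'.W.Localization ⥤ M.W.Localization) (β : G ⋙ M.W.Q ⟶ M'.W.Q ⋙ RG),
      IsLeftDerived M.W.Q (F ⋙ M'.W.Q) LF α ∧
      IsRightDerived M'.W.Q (G ⋙ M.W.Q) RG β ∧
      Nonempty (LF ⊣ RG) :=
  stmt8_general M M' F G adj hF hG
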